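/- arXiv:1712.08804 — 7 statements merged into one kernel-verified Lean document; each statement's English description precedes it below -/
import Mathlib

section
/- For all p > 0 and β > 0, B(p,β)^{1/p} ≤ g_β(p), where g_β(p) = (p/e) · inf_{λ>0} λ^{-1} exp(β(e^λ − 1)/p). -/
open Real

noncomputable def Bell (p β : ℝ) : ℝ :=
  Real.exp (-β) * ∑' k : ℕ, (k : ℝ) ^ p * β ^ k / (Nat.factorial k)

noncomputable def g (β p : ℝ) : ℝ :=
  (p / Real.exp 1) *
    sInf {y : ℝ | ∃ lam : ℝ, 0 < lam ∧ y = lam⁻¹ * Real.exp (β * (Real.exp lam - 1) / p)}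

lemma real_exp_tsum (x : ℝ) : Real.exp x = ∑' n : ℕ, x ^ n / (Nat.factorial n) := by
  rw [Real.exp_eq_exp_ℝ, NormedSpace.exp_eq_tsum_div]

lemma key_pow (p lam : ℝ) (hp : 0 < p) (hl : 0 < lam) (k : ℕ) :
    (k : ℝ) ^ p ≤ (p / (lam * Real.exp 1)) ^ p * Real.exp lam ^ k := by
  have hble : (0:ℝ) < p / (lam * Real.exp 1) :=
    div_pos hp (mul_pos hl (exp_pos 1))
  rcases Nat.eq_zero_or_pos k with hk | hk
  · subst hk
    rw [Nat.cast_zero, Real.zero_rpow hp.ne']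
    positivity
  · have h1 : (k : ℝ) ≤ (p / (lam * Real.exp 1)) * Real.exp (lam * k / p) := by
      have := Real.add_one_le_exp (lam * k / p - 1)
      have h2 : lam * k / p ≤ Real.exp (lam * k / p - 1) := by linarith
      have h3 : Real.exp (lam * k / p - 1) = Real.exp (lam * k / p) / Real.exp 1 := by
        rw [Real.exp_sub]
      rw [h3] at h2
      have h5 := mul_le_mul_of_nonneg_left h2 (div_pos hp hl).le
      have e1 : p / lam * (lam * (k:ℝ) / p) = (k : ℝ) := by
        field_simp
      have e2 : p / lam * (Real.exp (lam * k / p) / Real.exp 1)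
          = (p / (lam * Real.exp 1)) * Real.exp (lam * k / p) := by
        field_simp
      rw [e1, e2] at h5
      exact h5
    calc (k : ℝ) ^ p ≤ ((p / (lam * Real.exp 1)) * Real.exp (lam * k / p)) ^ p := by
          apply Real.rpow_le_rpow (Nat.cast_nonneg k) h1 hp.le
      _ = (p / (lam * Real.exp 1)) ^ p * Real.exp (lam * k / p) ^ p := by
          rw [Real.mul_rpow hble.le (Real.exp_pos _).le]
      _ = (p / (lam * Real.exp 1)) ^ p * Real.exp lam ^ k := by
          rw [← Real.exp_mul, div_mul_cancel₀ _ hp.ne', mul_comm lam (k:ℝ),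
            Real.exp_nat_mul]

lemma bell_le (p β lam : ℝ) (hp : 0 < p) (hβ : 0 < β) (hl : 0 < lam) :
    Bell p β ≤ (p / (lam * Real.exp 1)) ^ p * Real.exp (β * (Real.exp lam - 1)) := by
  set C := (p / (lam * Real.exp 1)) ^ p with hC
  have hCpos : 0 < C := Real.rpow_pos_of_pos (div_pos hp (mul_pos hl (exp_pos 1))) p
  have hsum2 : Summable fun k : ℕ => C * ((β * Real.exp lam) ^ k / (Nat.factorial k)) :=
    (Real.summable_pow_div_factorial (β * Real.exp lam)).mul_left C
  have hterm : ∀ k : ℕ, (k : ℝ) ^ p * β ^ k / (Nat.factorial k)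
      ≤ C * ((β * Real.exp lam) ^ k / (Nat.factorial k)) := by
    intro k
    have h1 := key_pow p lam hp hl k
    have hfac : (0:ℝ) < (Nat.factorial k : ℝ) := by positivity
    have hnum : (k : ℝ) ^ p * β ^ k ≤ C * (β * Real.exp lam) ^ k := by
      rw [mul_pow]
      calc (k : ℝ) ^ p * β ^ k ≤ (C * Real.exp lam ^ k) * β ^ k :=
            mul_le_mul_of_nonneg_right h1 (by positivity)
        _ = C * (β ^ k * Real.exp lam ^ k) := by ring
    rw [← mul_div_assoc]
    exact (div_le_div_iff_of_pos_right hfac).mpr hnum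
  have htsum : (∑' k : ℕ, (k : ℝ) ^ p * β ^ k / (Nat.factorial k))
      ≤ ∑' k : ℕ, C * ((β * Real.exp lam) ^ k / (Nat.factorial k)) := by
    apply Summable.tsum_le_tsum hterm _ hsum2
    apply hsum2.of_nonneg_of_le (fun k => by positivity) hterm
  have hrhs : (∑' k : ℕ, C * ((β * Real.exp lam) ^ k / (Nat.factorial k)))
      = C * Real.exp (β * Real.exp lam) := by
    rw [tsum_mul_left, ← real_exp_tsum]
  unfold Bell
  calc Real.exp (-β) * ∑' k : ℕ, (k : ℝ) ^ p * β ^ k / (Nat.factorial k)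
      ≤ Real.exp (-β) * (C * Real.exp (β * Real.exp lam)) := by
        rw [← hrhs]
        exact mul_le_mul_of_nonneg_left htsum (exp_pos _).le
    _ = C * Real.exp (β * (Real.exp lam - 1)) := by
        rw [mul_left_comm, ← Real.exp_add]
        congr 2
        ring

theorem bell_rpow_le_g (p β : ℝ) (hp : 0 < p) (hβ : 0 < β) :
    Bell p β ^ (1 / p) ≤ g β p := by
  have hBell_nonneg : 0 ≤ Bell p β := by
    unfold Bell
    apply mul_nonneg (exp_pos _).le
    apply tsum_nonneg
    intro k
    positivity
  have hpe : (0:ℝ) < p / Real.exp 1 := div_pos hp (exp_pos 1)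
  rw [g, ← div_le_iff₀' hpe]
  apply le_csInf
  · exact ⟨1⁻¹ * Real.exp (β * (Real.exp 1 - 1) / p), 1, one_pos, rfl⟩
  · rintro y ⟨lam, hl, rfl⟩
    rw [div_le_iff₀' hpe]
    have hble : (0:ℝ) < p / (lam * Real.exp 1) :=
      div_pos hp (mul_pos hl (exp_pos 1))
    have h := bell_le p β lam hp hβ hl
    calc Bell p β ^ (1 / p)
        ≤ ((p / (lam * Real.exp 1)) ^ p * Real.exp (β * (Real.exp lam - 1))) ^ (1 / p) :=
          Real.rpow_le_rpow hBell_nonneg h (by positivity)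
      _ = (p / (lam * Real.exp 1)) * Real.exp (β * (Real.exp lam - 1) / p) := by
          rw [Real.mul_rpow (by positivity) (exp_pos _).le,
            ← Real.rpow_mul hble.le, mul_one_div, div_self hp.ne', Real.rpow_one,
            ← Real.exp_mul, mul_one_div]
      _ = p / Real.exp 1 * (lam⁻¹ * Real.exp (β * (Real.exp lam - 1) / p)) := by
          field_simp
end

section
/- For every positive integer k, k! ≤ √(2πk) · (k/e)^k · e^{1/(12k)}. -/
/-!
Let `sₙ = n! / (√(2n) (n/e)ⁿ)` be the Stirling sequence. Robbins' stepwise bound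
`log sₙ - log sₙ₊₁ ≤ 1 / (12 n (n + 1)) = 1 / (12 n) - 1 / (12 (n + 1))` says that
`log sₙ - 1 / (12 n)` increases for `n ≥ 1`. It tends to `log √π` because `sₙ → √π`, so it stays
below `log √π`, that is `sₙ ≤ √π e^{1/(12 n)}`. Multiplying by `√(2n) (n/e)ⁿ` gives the theorem.
-/

open Real Filter Topology

open scoped Nat

namespace Stirling

lemma monotone_log_stirlingSeq_succ_sub :
    Monotone fun n : ℕ => log (stirlingSeq (n + 1)) - 1 / (12 * (n + 1 : ℝ)) :=
  monotone_nat_of_le_succ fun n => by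
    have hstep := log_stirlingSeq_sdiff_le (n + 1)
    have htelescope : (1 : ℝ) / (12 * (n + 1) * (n + 1 + 1)) =
        1 / (12 * (n + 1)) - 1 / (12 * (n + 1 + 1)) := by
      field_simp
      ring
    push_cast at hstep ⊢
    linarith

lemma tendsto_log_stirlingSeq_succ_sub :
    Tendsto (fun n : ℕ => log (stirlingSeq (n + 1)) - 1 / (12 * (n + 1 : ℝ))) atTop
      (𝓝 (log √π)) := by
  have hlog : Tendsto (fun n : ℕ => log (stirlingSeq (n + 1))) atTop (𝓝 (log √π)) :=
    (continuousAt_log (by positivity)).tendsto.comp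
      (tendsto_stirlingSeq_sqrt_pi.comp (tendsto_add_atTop_nat 1))
  have hcorr : Tendsto (fun n : ℕ => 1 / (12 * (n + 1 : ℝ))) atTop (𝓝 0) :=
    tendsto_const_nhds.div_atTop <|
      (tendsto_natCast_atTop_atTop.atTop_add tendsto_const_nhds).const_mul_atTop (by norm_num)
  simpa using hlog.sub hcorr

lemma log_stirlingSeq_le {n : ℕ} (hn : n ≠ 0) :
    log (stirlingSeq n) ≤ log √π + 1 / (12 * n) := by
  obtain ⟨m, rfl⟩ := Nat.exists_eq_succ_of_ne_zero hn
  have := monotone_log_stirlingSeq_succ_sub.ge_of_tendsto tendsto_log_stirlingSeq_succ_sub m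
  push_cast
  linarith

lemma stirlingSeq_le {n : ℕ} (hn : n ≠ 0) : stirlingSeq n ≤ √π * exp (1 / (12 * n)) := by
  have hpos : 0 < stirlingSeq n := (sqrt_pos.2 pi_pos).trans_le (sqrt_pi_le_stirlingSeq hn)
  rw [← exp_log (sqrt_pos.2 pi_pos), ← exp_add, ← log_le_iff_le_exp hpos]
  exact log_stirlingSeq_le hn

end Stirling

open Stirling

theorem factorial_le_robbins (k : ℕ) (hk : 1 ≤ k) :
    (Nat.factorial k : ℝ) ≤
      Real.sqrt (2 * Real.pi * k) * ((k : ℝ) / Real.exp 1) ^ k *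
        Real.exp (1 / (12 * k)) := by
  have hk0 : k ≠ 0 := Nat.one_le_iff_ne_zero.1 hk
  have hsqrt : √(2 * π * k) = √π * √(2 * k) := by
    rw [← sqrt_mul pi_pos.le]
    ring_nf
  calc (k ! : ℝ) = stirlingSeq k * (√(2 * k) * (k / exp 1) ^ k) := by
        rw [stirlingSeq, div_mul_cancel₀]
        positivity
    _ ≤ √π * exp (1 / (12 * k)) * (√(2 * k) * (k / exp 1) ^ k) := by
        gcongr
        exact stirlingSeq_le hk0
    _ = √(2 * π * k) * (k / exp 1) ^ k * exp (1 / (12 * k)) := by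
        rw [hsqrt]
        ring
end

section
/- There exists an absolute constant p₀ ≥ 2 such that for all real p ≥ p₀, the Bell numbers satisfy B(p)^{1/p} ≤ (p/e)/(ln p − ln ln p) · exp(1/ln p − 1/p). -/
/-! For every `λ > 0`, the inequality `u ≤ exp (u - 1)` applied to `u = λ k / p` gives
`k ^ p ≤ (p / (e λ)) ^ p * exp (λ k)`, and summing against `1 / k!` yields
`B(p) ≤ (p / (e λ)) ^ p * exp (e ^ λ - 1)`. The choice `λ = log p - log log p` makes `e ^ λ = p / log p`,
and taking `p`-th roots gives the bound. -/

open Real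

lemma rpow_le_mul_exp_mul {x p l : ℝ} (hx : 0 ≤ x) (hp : 0 < p) (hl : 0 < l) :
    x ^ p ≤ (p / (exp 1 * l)) ^ p * exp (l * x) := by
  have key : l * x / p ≤ exp (l * x / p - 1) := by linarith [add_one_le_exp (l * x / p - 1)]
  calc x ^ p = (p / l) ^ p * (l * x / p) ^ p := by
        rw [← mul_rpow (by positivity) (by positivity)]
        congr 1
        field_simp
    _ ≤ (p / l) ^ p * exp (l * x / p - 1) ^ p := by gcongr
    _ = (p / (exp 1 * l)) ^ p * exp (l * x) := by
        rw [mul_comm (exp 1), ← div_div, div_rpow (by positivity) (exp_pos 1).le, exp_one_rpow,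
          ← exp_mul, sub_mul, div_mul_cancel₀ _ hp.ne', one_mul, exp_sub]
        ring

lemma hasSum_exp_mul_div_factorial (l : ℝ) :
    HasSum (fun k : ℕ => exp (l * k) / k.factorial) (exp (exp l)) := by
  have h := NormedSpace.expSeries_div_hasSum_exp (exp l)
  simp only [← exp_eq_exp_ℝ, ← exp_nat_mul] at h
  simpa only [mul_comm l] using h

lemma Bell_nonneg (p : ℝ) {β : ℝ} (hβ : 0 ≤ β) : 0 ≤ Bell p β :=
  mul_nonneg (exp_pos _).le (tsum_nonneg fun k => by positivity)

lemma Bell_one_le {p l : ℝ} (hp : 0 < p) (hl : 0 < l) :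
    Bell p 1 ≤ (p / (exp 1 * l)) ^ p * exp (exp l - 1) := by
  set C := (p / (exp 1 * l)) ^ p
  have hdom : HasSum (fun k : ℕ => C * (exp (l * k) / k.factorial)) (C * exp (exp l)) :=
    (hasSum_exp_mul_div_factorial l).mul_left C
  have hle (k : ℕ) : (k : ℝ) ^ p * 1 ^ k / k.factorial ≤ C * (exp (l * k) / k.factorial) := by
    rw [one_pow, mul_one, ← mul_div_assoc]
    gcongr
    exact rpow_le_mul_exp_mul k.cast_nonneg hp hl
  have hsum : Summable fun k : ℕ => (k : ℝ) ^ p * 1 ^ k / k.factorial :=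
    hdom.summable.of_nonneg_of_le (fun k => by positivity) hle
  calc Bell p 1 ≤ exp (-1) * (C * exp (exp l)) :=
        mul_le_mul_of_nonneg_left (hasSum_le hle hsum.hasSum hdom) (exp_pos _).le
    _ = C * exp (exp l - 1) := by rw [sub_eq_add_neg, exp_add]; ring

lemma Bell_one_rpow_inv_le {p l : ℝ} (hp : 0 < p) (hl : 0 < l) :
    Bell p 1 ^ (1 / p) ≤ p / (exp 1 * l) * exp ((exp l - 1) / p) := by
  calc Bell p 1 ^ (1 / p) ≤ ((p / (exp 1 * l)) ^ p * exp (exp l - 1)) ^ (1 / p) :=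
        rpow_le_rpow (Bell_nonneg p zero_le_one) (Bell_one_le hp hl) (by positivity)
    _ = p / (exp 1 * l) * exp ((exp l - 1) / p) := by
        rw [mul_rpow (by positivity) (exp_pos _).le, ← rpow_mul (by positivity),
          mul_one_div_cancel hp.ne', rpow_one, ← exp_mul, mul_one_div]

theorem bell_one_upper : ∃ p₀ : ℝ, 2 ≤ p₀ ∧ ∀ p : ℝ, p₀ ≤ p →
    Bell p 1 ^ (1 / p) ≤
      (p / Real.exp 1) / (Real.log p - Real.log (Real.log p)) *
        Real.exp (1 / Real.log p - 1 / p) := by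
  refine ⟨2, le_rfl, fun p hp => ?_⟩
  have hp0 : 0 < p := by linarith
  have hlog : 0 < log p := log_pos (by linarith)
  have hl : 0 < log p - log (log p) := by linarith [log_le_sub_one_of_pos hlog]
  have hexp : exp (log p - log (log p)) = p / log p := by
    rw [exp_sub, exp_log hp0, exp_log hlog]
  calc Bell p 1 ^ (1 / p) ≤ _ := Bell_one_rpow_inv_le hp0 hl
    _ = _ := by
        rw [hexp, div_div]
        congr 2
        field_simp
end

section
/- For β > 0 fixed and p ≥ max(2β, 1) with p/β large enough, B(p,β)^{1/p} ≤ (p/e)/(ln(p/β) − ln ln(p/β)) · exp(1/ln(p/β) − 1/(p/β)). -/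
open Real

theorem bell_upper_two_var (β p : ℝ) (hβ : 0 < β) (h2β : 2 * β ≤ p) (h1 : 1 ≤ p)
    (hlarge : Real.exp 1 < p / β) :
    Bell p β ^ (1 / p) ≤
      (p / Real.exp 1) / (Real.log (p / β) - Real.log (Real.log (p / β))) *
        Real.exp (1 / Real.log (p / β) - 1 / (p / β)) := by
  set r := p / β with hr
  have hp : 0 < p := lt_of_lt_of_le one_pos h1
  have hrpos : 0 < r := div_pos hp hβ
  have hL1 : 1 < Real.log r := by
    have := Real.log_lt_log (Real.exp_pos 1) hlarge
    rwa [Real.log_exp] at this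
  set L := Real.log r with hLdef
  have hL0 : 0 < L := lt_trans one_pos hL1
  set lam := L - Real.log L with hlam
  have hlam0 : 0 < lam := by
    have := Real.log_le_sub_one_of_pos hL0
    simp only [hlam]
    linarith
  have hexplam : Real.exp lam = r / L := by
    rw [hlam, Real.exp_sub, Real.exp_log hrpos, Real.exp_log hL0]
  set C := (p / (Real.exp 1 * lam)) ^ p with hC
  have hbase : 0 < p / (Real.exp 1 * lam) := div_pos hp (mul_pos (Real.exp_pos 1) hlam0)
  have hCpos : 0 < C := Real.rpow_pos_of_pos hbase p
  have key : ∀ k : ℕ, (k : ℝ) ^ p ≤ C * Real.exp (lam * k) := by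
    intro k
    rcases Nat.eq_zero_or_pos k with hk | hk
    · subst hk
      simp only [Nat.cast_zero]
      rw [Real.zero_rpow (by positivity)]
      positivity
    · have hkpos : (0:ℝ) < k := Nat.cast_pos.mpr hk
      rw [hC, Real.rpow_def_of_pos hkpos, Real.rpow_def_of_pos hbase, ← Real.exp_add]
      apply Real.exp_le_exp.mpr
      have hlog : Real.log (lam * k / p) ≤ lam * k / p - 1 :=
        Real.log_le_sub_one_of_pos (by positivity)
      rw [Real.log_div (by positivity) (ne_of_gt hp),
        Real.log_mul (ne_of_gt hlam0) (ne_of_gt hkpos)] at hlog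
      rw [Real.log_div (ne_of_gt hp) (by positivity),
        Real.log_mul (ne_of_gt (Real.exp_pos 1)) (ne_of_gt hlam0), Real.log_exp]
      have h2 : Real.log k ≤ lam * k / p + Real.log p - Real.log lam - 1 := by linarith
      have h5 : (lam * k / p) * p = lam * k := div_mul_cancel₀ _ (ne_of_gt hp)
      have h6 := mul_le_mul_of_nonneg_right h2 (le_of_lt hp)
      nlinarith [h5, h6]
  have hsumg : Summable (fun k : ℕ => (β * Real.exp lam) ^ k / (Nat.factorial k : ℝ)) :=
    Real.summable_pow_div_factorial _
  have hterm : ∀ k : ℕ, (k : ℝ) ^ p * β ^ k / (Nat.factorial k)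
      ≤ C * ((β * Real.exp lam) ^ k / Nat.factorial k) := by
    intro k
    have h1' := mul_le_mul_of_nonneg_right (key k)
      (show (0:ℝ) ≤ β ^ k / Nat.factorial k by positivity)
    calc (k : ℝ) ^ p * β ^ k / (Nat.factorial k)
        = (k : ℝ) ^ p * (β ^ k / Nat.factorial k) := by ring
      _ ≤ C * Real.exp (lam * k) * (β ^ k / Nat.factorial k) := h1'
      _ = C * ((β * Real.exp lam) ^ k / Nat.factorial k) := by
          rw [mul_pow, ← Real.exp_nat_mul, mul_comm (k:ℝ) lam]
          ring
  have hnn : ∀ k : ℕ, 0 ≤ (k : ℝ) ^ p * β ^ k / (Nat.factorial k) := by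
    intro k
    have : (0:ℝ) ≤ (k : ℝ) ^ p := Real.rpow_nonneg (Nat.cast_nonneg k) p
    positivity
  have hsumf : Summable (fun k : ℕ => (k : ℝ) ^ p * β ^ k / (Nat.factorial k)) :=
    Summable.of_nonneg_of_le hnn hterm (hsumg.mul_left C)
  have htsum : (∑' k : ℕ, (k : ℝ) ^ p * β ^ k / Nat.factorial k)
      ≤ C * Real.exp (β * Real.exp lam) := by
    calc (∑' k : ℕ, (k : ℝ) ^ p * β ^ k / Nat.factorial k)
        ≤ ∑' k : ℕ, C * ((β * Real.exp lam) ^ k / Nat.factorial k) :=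
          Summable.tsum_le_tsum hterm hsumf (hsumg.mul_left C)
      _ = C * Real.exp (β * Real.exp lam) := by
          rw [tsum_mul_left, Real.exp_eq_exp_ℝ, NormedSpace.exp_eq_tsum_div]
  have hBell : Bell p β ≤ C * Real.exp (β * Real.exp lam - β) := by
    have hm := mul_le_mul_of_nonneg_left htsum (le_of_lt (Real.exp_pos (-β)))
    calc Bell p β ≤ Real.exp (-β) * (C * Real.exp (β * Real.exp lam)) := hm
      _ = C * Real.exp (β * Real.exp lam - β) := by
          have habc : ∀ a b c : ℝ, Real.exp (-b) * (c * Real.exp a) = c * Real.exp (a - b) := by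
            intro a b c
            rw [Real.exp_sub, Real.exp_neg]
            ring
          exact habc _ _ _
  have hBell0 : 0 ≤ Bell p β :=
    mul_nonneg (le_of_lt (Real.exp_pos _)) (tsum_nonneg hnn)
  have hmain : Bell p β ^ (1 / p) ≤ (C * Real.exp (β * Real.exp lam - β)) ^ (1 / p) :=
    Real.rpow_le_rpow hBell0 hBell (by positivity)
  have hRHS : (C * Real.exp (β * Real.exp lam - β)) ^ (1 / p)
      = (p / Real.exp 1) / lam * Real.exp (1 / L - 1 / r) := by
    rw [Real.mul_rpow (le_of_lt hCpos) (le_of_lt (Real.exp_pos _)), hC,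
      ← Real.rpow_mul (le_of_lt hbase), mul_one_div_cancel (ne_of_gt hp),
      Real.rpow_one, ← Real.exp_mul]
    congr 1
    · rw [div_div]
    · rw [hexplam]
      have hβr : β * r = p := by
        rw [hr]; field_simp
      have h1r : 1 / r = β / p := by
        rw [hr]; field_simp
      rw [h1r, Real.exp_eq_exp]
      field_simp
      nlinarith [hβr]
  calc Bell p β ^ (1 / p) ≤ (C * Real.exp (β * Real.exp lam - β)) ^ (1 / p) := hmain
    _ = (p / Real.exp 1) / lam * Real.exp (1 / L - 1 / r) := hRHS
end

section
/- There exist constants C₁, C₂ > 0 and p₀ ≥ 2 such that for all p ≥ p₀: (p/(e ln p)) · (1 − C₂ · ln ln p / ln p) ≤ B(p)^{1/p} ≤ (p/(e ln p)) · (1 + C₁ · ln ln p / ln p). -/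
set_option maxHeartbeats 1000000


open Real

lemma exp_le_one_add_two_mul {x : ℝ} (h0 : 0 ≤ x) (h : x ≤ 1/2) :
    Real.exp x ≤ 1 + 2*x := by
  have h1 : 1 - x ≤ Real.exp (-x) := by
    have := Real.add_one_le_exp (-x); linarith
  have h2 : Real.exp x * (1-x) ≤ 1 := by
    have h3 : Real.exp x * (1-x) ≤ Real.exp x * Real.exp (-x) :=
      mul_le_mul_of_nonneg_left h1 (Real.exp_pos x).le
    rwa [← Real.exp_add, add_neg_cancel, Real.exp_zero] at h3
  nlinarith [Real.exp_pos x]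

lemma rpow_le_aux (p lam : ℝ) (hp : 0 < p) (hlam : 0 < lam) (k : ℕ) :
    (k:ℝ)^p ≤ (p/(lam * Real.exp 1))^p * Real.exp lam ^ k := by
  have hc : 0 < p/(lam * Real.exp 1) := div_pos hp (by positivity)
  rcases Nat.eq_zero_or_pos k with rfl | hk
  · rw [Nat.cast_zero, Real.zero_rpow hp.ne']
    positivity
  · have hk0 : (0:ℝ) < k := by exact_mod_cast hk
    have hlog : Real.log ((k*lam)/p) ≤ (k*lam)/p - 1 :=
      Real.log_le_sub_one_of_pos (by positivity)
    rw [Real.log_div (by positivity) hp.ne', Real.log_mul hk0.ne' hlam.ne'] at hlog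
    have h2 : Real.log k ≤ Real.log p - Real.log lam - 1 + (k*lam)/p := by linarith
    have h3 : Real.log k * p ≤ (Real.log p - Real.log lam - 1) * p + k * lam := by
      have h4 := mul_le_mul_of_nonneg_right h2 hp.le
      have h5 : (Real.log p - Real.log lam - 1 + (k*lam)/p) * p
          = (Real.log p - Real.log lam - 1) * p + k * lam := by
        field_simp
      linarith
    have hlc : Real.log (p/(lam * Real.exp 1)) = Real.log p - Real.log lam - 1 := by
      rw [Real.log_div hp.ne' (by positivity),
        Real.log_mul hlam.ne' (Real.exp_pos 1).ne', Real.log_exp]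
      ring
    rw [Real.rpow_def_of_pos hk0, Real.rpow_def_of_pos hc, ← Real.exp_nat_mul,
      ← Real.exp_add]
    apply Real.exp_le_exp.mpr
    rw [hlc]
    nlinarith [h3]

theorem bell_two_sided : ∃ C₁ C₂ p₀ : ℝ, 0 < C₁ ∧ 0 < C₂ ∧ 2 ≤ p₀ ∧
    ∀ p : ℝ, p₀ ≤ p →
      (p / (Real.exp 1 * Real.log p)) * (1 - C₂ * Real.log (Real.log p) / Real.log p)
        ≤ Bell p 1 ^ (1 / p) ∧
      Bell p 1 ^ (1 / p) ≤
        (p / (Real.exp 1 * Real.log p)) * (1 + C₁ * Real.log (Real.log p) / Real.log p) := by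
  refine ⟨6, 1, Real.exp (Real.exp 1), by norm_num, by norm_num, ?_, ?_⟩
  · -- 2 ≤ exp (exp 1)
    have h1 : (1:ℝ) ≤ Real.exp 1 := by linarith [Real.add_one_le_exp (1:ℝ)]
    have h2 : Real.exp 1 + 1 ≤ Real.exp (Real.exp 1) := Real.add_one_le_exp _
    linarith
  intro p hp
  set L := Real.log p with hLdef
  set LL := Real.log L with hLLdef
  have hE1 : (2:ℝ) ≤ Real.exp 1 := by
    have := Real.add_one_le_exp (1:ℝ); linarith
  have hp0 : (0:ℝ) < p := lt_of_lt_of_le (Real.exp_pos _) hp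
  have hLe : Real.exp 1 ≤ L := by
    have := Real.log_le_log (Real.exp_pos (Real.exp 1)) hp
    rwa [Real.log_exp] at this
  have hL0 : (0:ℝ) < L := by linarith
  have hL1 : (1:ℝ) < L := by linarith
  have hLL1 : (1:ℝ) ≤ LL := by
    have := Real.log_le_log (Real.exp_pos 1) hLe
    rwa [Real.log_exp] at this
  have hLL0 : (0:ℝ) < LL := by linarith
  -- LL ≤ L/2
  have hLLhalf : LL ≤ L / 2 := by
    have h1 : Real.log (L/2) ≤ L/2 - 1 := Real.log_le_sub_one_of_pos (by positivity)
    have h2 : Real.log (L/2) = LL - Real.log 2 := by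
      rw [hLLdef, Real.log_div hL0.ne' (by norm_num)]
    have h3 : Real.log 2 ≤ 1 := by
      have := Real.log_le_sub_one_of_pos (show (0:ℝ) < 2 by norm_num); linarith
    linarith
  have hexpL : Real.exp L = p := Real.exp_log hp0
  have hLsq : L^2 ≤ p := by
    have h1 : L^2 = Real.exp (2 * LL) := by
      rw [two_mul, Real.exp_add, hLLdef, Real.exp_log hL0]; ring
    rw [h1, ← hexpL]
    exact Real.exp_le_exp.mpr (by linarith)
  have hpL : L ≤ p := by nlinarith
  have hAL : L ≤ p / L := by
    rw [le_div_iff₀ hL0]; nlinarith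
  -- the series
  set f : ℕ → ℝ := fun k => (k:ℝ)^p / (Nat.factorial k) with hfdef
  have hfnonneg : ∀ k, 0 ≤ f k := by
    intro k
    apply div_nonneg (Real.rpow_nonneg (Nat.cast_nonneg k) p)
    positivity
  have hBell : Bell p 1 = Real.exp (-1) * ∑' k, f k := by
    unfold Bell
    norm_num [hfdef]
  set lam := L - LL with hlamdef
  have hlam0 : 0 < lam := by rw [hlamdef]; linarith
  set c := p / (lam * Real.exp 1) with hcdef
  have hc0 : 0 < c := div_pos hp0 (by positivity)
  have hexplam : Real.exp lam = p / L := by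
    rw [hlamdef, Real.exp_sub, hexpL, hLLdef, Real.exp_log hL0]
  set g : ℕ → ℝ := fun k => c^p * (Real.exp lam ^ k / (Nat.factorial k)) with hgdef
  have hgsum : Summable g := (Real.summable_pow_div_factorial (Real.exp lam)).mul_left _
  have hfg : ∀ k, f k ≤ g k := by
    intro k
    rw [hfdef, hgdef]
    simp only
    rw [mul_div_assoc']
    apply div_le_div_of_nonneg_right ?_ (by positivity)
    · exact rpow_le_aux p lam hp0 hlam0 k
  have hfsum : Summable f := Summable.of_nonneg_of_le hfnonneg hfg hgsum
  have hgtsum : ∑' k, g k = c^p * Real.exp (Real.exp lam) := by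
    rw [hgdef, tsum_mul_left]
    congr 1
    rw [Real.exp_eq_exp_ℝ, NormedSpace.exp_eq_tsum_div]
  have hBellnn : 0 ≤ Bell p 1 := by
    rw [hBell]
    exact mul_nonneg (Real.exp_pos _).le (tsum_nonneg hfnonneg)
  have hpinv : 0 < 1/p := by positivity
  constructor
  · -- lower bound
    set k := Nat.floor (p / L) with hkdef
    have hk1 : 1 ≤ k := by
      apply Nat.le_floor
      push_cast
      linarith
    have hk0 : (0:ℝ) < k := by exact_mod_cast hk1
    have hkle : (k:ℝ) ≤ p / L := Nat.floor_le (by positivity)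
    have hkge : p / L - 1 ≤ k := by
      have := Nat.sub_one_lt_floor (p / L)
      linarith
    -- k! ≤ exp (p - 1)
    have hklogk : (k:ℝ) * Real.log k ≤ p - p * (LL/L) := by
      have h1 : Real.log k ≤ lam := by
        have := Real.log_le_log hk0 hkle
        rwa [← hexplam, Real.log_exp] at this
      have h2 : 0 ≤ Real.log k := Real.log_nonneg (by exact_mod_cast hk1)
      have h3 : (k:ℝ) * Real.log k ≤ (p/L) * lam :=
        mul_le_mul hkle h1 h2 (by positivity)
      have h4 : (p/L) * lam = p - p * (LL/L) := by
        rw [hlamdef]; field_simp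
      linarith
    have hpu : 1 ≤ p * (LL/L) := by
      have h1 : (1:ℝ) ≤ p / L := le_trans (by linarith) hAL
      have h2 : p / L ≤ p * LL / L := by gcongr; nlinarith
      have h3 : p * (LL/L) = p * LL / L := by ring
      linarith
    have hpu2 : 1 ≤ p * LL / L^2 := by
      rw [le_div_iff₀ (by positivity)]
      nlinarith
    have hfact : (Nat.factorial k : ℝ) ≤ Real.exp (p - 1) := by
      have h1 : (Nat.factorial k : ℝ) ≤ (k:ℝ)^k := by
        exact_mod_cast Nat.factorial_le_pow k
      have h2 : (k:ℝ)^k = Real.exp ((k:ℝ) * Real.log k) := by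
        rw [Real.exp_nat_mul, Real.exp_log hk0]
      rw [h2] at h1
      apply h1.trans
      apply Real.exp_le_exp.mpr
      linarith
    -- (k/e)^p ≤ Bell p 1
    have hterm : ((k:ℝ)/Real.exp 1)^p ≤ Bell p 1 := by
      have h1 : f k ≤ ∑' j, f j := Summable.le_tsum hfsum k (fun j _ => hfnonneg j)
      have h2 : ((k:ℝ)/Real.exp 1)^p ≤ Real.exp (-1) * f k := by
        have e1 : ((k:ℝ)/Real.exp 1)^p = (k:ℝ)^p / Real.exp p := by
          rw [Real.div_rpow (Nat.cast_nonneg k) (Real.exp_pos 1).le, Real.exp_one_rpow]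
        have emul : Real.exp (-1) * Real.exp 1 = 1 := by
          rw [← Real.exp_add]; norm_num
        have e2 : Real.exp (-1) * ((k:ℝ)^p / Real.exp (p-1)) = (k:ℝ)^p / Real.exp p := by
          rw [Real.exp_sub, eq_div_iff (Real.exp_pos p).ne']
          field_simp [Real.exp_ne_zero]
          linear_combination emul
        have h3 : (k:ℝ)^p / Real.exp (p-1) ≤ f k := by
          rw [hfdef]
          simp only
          gcongr
        calc ((k:ℝ)/Real.exp 1)^p = Real.exp (-1) * ((k:ℝ)^p / Real.exp (p-1)) := by
              rw [e2, e1]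
          _ ≤ Real.exp (-1) * f k := mul_le_mul_of_nonneg_left h3 (Real.exp_pos _).le
      calc ((k:ℝ)/Real.exp 1)^p ≤ Real.exp (-1) * f k := h2
        _ ≤ Real.exp (-1) * ∑' j, f j :=
            mul_le_mul_of_nonneg_left h1 (Real.exp_pos _).le
        _ = Bell p 1 := hBell.symm
    have hroot : (k:ℝ)/Real.exp 1 ≤ Bell p 1 ^ (1/p) := by
      have h1 := Real.rpow_le_rpow (Real.rpow_nonneg (by positivity) p) hterm hpinv.le
      rwa [← Real.rpow_mul (by positivity), mul_one_div_cancel hp0.ne',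
        Real.rpow_one] at h1
    apply le_trans _ hroot
    -- (p/(e L)) (1 - LL/L) ≤ k / e
    have h1 : p / L * (1 - 1 * LL / L) ≤ k := by
      have hid : p / L * (1 - 1 * LL / L) = p / L - p * LL / L^2 := by
        field_simp
      rw [hid]
      linarith [hkge, hpu2]
    have heq : p / (Real.exp 1 * L) * (1 - 1 * LL / L)
        = (p / L * (1 - 1 * LL / L)) / Real.exp 1 := by
      field_simp
    rw [heq]
    gcongr
  · -- upper bound
    have hT : ∑' j, f j ≤ c^p * Real.exp (p/L) := by
      rw [← hexplam, ← hgtsum]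
      exact Summable.tsum_le_tsum hfg hfsum hgsum
    have hB : Bell p 1 ≤ c^p * Real.exp (p/L - 1) := by
      rw [hBell]
      calc Real.exp (-1) * ∑' j, f j ≤ Real.exp (-1) * (c^p * Real.exp (p/L)) :=
            mul_le_mul_of_nonneg_left hT (Real.exp_pos _).le
        _ = c^p * Real.exp (p/L - 1) := by
            rw [mul_comm, mul_assoc, ← Real.exp_add]; ring_nf
    have hroot : Bell p 1 ^ (1/p) ≤ c * Real.exp (1/L) := by
      have h1 := Real.rpow_le_rpow hBellnn hB hpinv.le
      rw [Real.mul_rpow (by positivity) (Real.exp_pos _).le,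
        ← Real.rpow_mul hc0.le, mul_one_div_cancel hp0.ne', Real.rpow_one,
        ← Real.exp_mul] at h1
      apply h1.trans
      apply mul_le_mul_of_nonneg_left _ hc0.le
      apply Real.exp_le_exp.mpr
      have : (p/L) * (1/p) = 1/L := by
        field_simp
      nlinarith [hpinv, hp0]
    apply hroot.trans
    -- c * exp(1/L) ≤ (p/(eL))(1+6u)
    set u := LL / L with hudef
    have hu0 : 0 < u := div_pos hLL0 hL0
    have hu2 : u ≤ 1/2 := by
      rw [hudef, div_le_iff₀ hL0]; linarith
    have huL : 1/L ≤ u := by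
      rw [hudef, div_le_div_iff₀ hL0 hL0]; nlinarith
    have hexpu : Real.exp (1/L) ≤ 1 + 2*u := by
      have h1 : Real.exp (1/L) ≤ 1 + 2*(1/L) := by
        apply exp_le_one_add_two_mul (by positivity)
        rw [div_le_iff₀ hL0]; linarith
      linarith
    have hLLu : LL = u * L := by rw [hudef]; field_simp
    have hkey : c * Real.exp (1/L) ≤ p / (Real.exp 1 * L) * (1 + 6 * LL / L) := by
      have h1 : c * Real.exp (1/L) ≤ c * (1 + 2*u) :=
        mul_le_mul_of_nonneg_left hexpu hc0.le
      apply h1.trans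
      rw [hcdef]
      have h6 : 6 * LL / L = 6 * u := by rw [hudef]; ring
      rw [h6, div_mul_eq_mul_div, div_mul_eq_mul_div, div_le_div_iff₀ (by positivity)
        (by positivity)]
      have hlamu : lam = L * (1 - u) := by rw [hlamdef, hLLu]; ring
      rw [hlamu]
      have hscal : (1 + 2*u) ≤ (1 + 6*u) * (1 - u) := by nlinarith
      have hpos : (0:ℝ) ≤ p * L * Real.exp 1 := by positivity
      nlinarith [mul_le_mul_of_nonneg_left hscal hpos]
    exact hkey
end

section
/- For all p ≥ 1 and β > 0 with p ≤ 2β, B(p,β)^{1/p} ≥ K₋ · β, where K₋ = (2π)^{-1/2} · exp(−1/(2e) + 1/3) ≈ 0.65. -/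
/-! Under the Poisson weights `e^{-β} β^k / k!`, which have total mass `1` and mean `β`,
`B(p, β)` is the `p`-th moment. For `p ≥ 1` the map `t ↦ t ^ p` lies above its tangent line at
`β`, so averaging that tangent line (Jensen's inequality) gives `B(p, β) ≥ β ^ p`, i.e.
`B(p, β) ^ (1/p) ≥ β`. The claim follows because `K₋ ≤ (1/2) · e^{1/3} < 1`. -/

open Real

open scoped Nat

lemma hasSum_pow_div_factorial (x : ℝ) : HasSum (fun k : ℕ => x ^ k / k !) (exp x) := by
  rw [exp_eq_exp_ℝ]
  exact NormedSpace.expSeries_div_hasSum_exp x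

lemma hasSum_natCast_mul_pow_div_factorial (x : ℝ) :
    HasSum (fun k : ℕ => (k : ℝ) * x ^ k / k !) (x * exp x) := by
  have hshift : (fun k : ℕ => ((k + 1 : ℕ) : ℝ) * x ^ (k + 1) / (k + 1)!) =
      fun k => x * (x ^ k / k !) := by
    ext k
    rw [Nat.factorial_succ]
    push_cast
    field_simp
    ring
  rw [← hasSum_nat_add_iff' 1, hshift]
  simpa using (hasSum_pow_div_factorial x).mul_left x

lemma summable_rpow_mul_pow_div_factorial {p x : ℝ} (hp : 0 ≤ p) (hx : 0 ≤ x) :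
    Summable fun k : ℕ => (k : ℝ) ^ p * x ^ k / k ! := by
  refine Summable.of_nonneg_of_le (fun k => by positivity) (fun k => ?_)
    (Real.summable_pow_div_factorial (2 ^ p * x))
  have hk : (k : ℝ) ^ p ≤ (2 ^ p) ^ k := by
    rw [rpow_pow_comm zero_le_two]
    exact rpow_le_rpow k.cast_nonneg (mod_cast Nat.lt_two_pow_self.le) hp
  rw [mul_pow]
  gcongr

lemma rpow_add_mul_sub_le_rpow {p β t : ℝ} (hp : 1 ≤ p) (hβ : 0 < β) (ht : 0 ≤ t) :
    β ^ p + p * β ^ (p - 1) * (t - β) ≤ t ^ p := by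
  have hbernoulli : 1 + p * (t / β - 1) ≤ (t / β) ^ p := by
    simpa using one_add_mul_self_le_rpow_one_add (s := t / β - 1)
      (by linarith [div_nonneg ht hβ.le]) hp
  calc β ^ p + p * β ^ (p - 1) * (t - β) = (1 + p * (t / β - 1)) * β ^ p := by
        rw [rpow_sub_one hβ.ne']
        field_simp
    _ ≤ (t / β) ^ p * β ^ p := by gcongr
    _ = t ^ p := by rw [div_rpow ht hβ.le, div_mul_cancel₀ _ (rpow_pos_of_pos hβ p).ne']

lemma rpow_le_bell {p β : ℝ} (hp : 1 ≤ p) (hβ : 0 < β) : β ^ p ≤ Bell p β := by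
  set c := p * β ^ (p - 1)
  have htangent :
      HasSum (fun k : ℕ => (β ^ p + c * (k - β)) * (β ^ k / k !)) (β ^ p * exp β) := by
    have h := ((hasSum_pow_div_factorial β).mul_left (β ^ p - c * β)).add
      ((hasSum_natCast_mul_pow_div_factorial β).mul_left c)
    rw [show (β ^ p - c * β) * exp β + c * (β * exp β) = β ^ p * exp β by ring] at h
    exact h.congr_fun fun k => by ring
  have hmoment : β ^ p * exp β ≤ ∑' k : ℕ, (k : ℝ) ^ p * β ^ k / k ! := by
    refine hasSum_le (fun k => ?_) htangent
      (summable_rpow_mul_pow_div_factorial (p := p) (by linarith) hβ.le).hasSum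
    rw [mul_div_assoc]
    gcongr
    exact rpow_add_mul_sub_le_rpow hp hβ k.cast_nonneg
  rwa [Bell, exp_neg, ← div_le_iff₀' (by positivity), div_inv_eq_mul]

lemma two_pi_rpow_neg_half_mul_exp_le_one :
    (2 * π) ^ (-(1 : ℝ) / 2) * exp (-1 / (2 * exp 1) + 1 / 3) ≤ 1 := by
  have hpi : (2 * π) ^ (-(1 : ℝ) / 2) ≤ 1 / 2 := by
    calc (2 * π) ^ (-(1 : ℝ) / 2) ≤ 4 ^ (-(1 : ℝ) / 2) :=
          rpow_le_rpow_of_nonpos (by norm_num) (by linarith [pi_gt_three]) (by norm_num)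
      _ = 1 / 2 := by
          rw [show (4 : ℝ) = 2 ^ (2 : ℝ) by norm_num, ← rpow_mul zero_le_two]
          norm_num
  have hexp : exp (-1 / (2 * exp 1) + 1 / 3) ≤ 2 := by
    calc exp (-1 / (2 * exp 1) + 1 / 3) ≤ exp (log 2) := by
          gcongr
          linarith [log_two_gt_d9, div_nonpos_of_nonpos_of_nonneg (by norm_num : (-1 : ℝ) ≤ 0)
            (by positivity : 0 ≤ 2 * exp 1)]
      _ = 2 := exp_log two_pos
  calc (2 * π) ^ (-(1 : ℝ) / 2) * exp (-1 / (2 * exp 1) + 1 / 3) ≤ 1 / 2 * 2 := by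
        gcongr
    _ = 1 := by norm_num

theorem bell_lower_Kminus_general (p β : ℝ) (hp : 1 ≤ p) (hβ : 0 < β) :
    (2 * Real.pi) ^ (-(1 : ℝ) / 2) *
      Real.exp (-1 / (2 * Real.exp 1) + 1 / 3) * β ≤ Bell p β ^ (1 / p) := by
  have hβ_le : β ≤ Bell p β ^ (1 / p) := by
    have hbell := rpow_le_bell hp hβ
    rwa [one_div, le_rpow_inv_iff_of_pos hβ.le ((rpow_pos_of_pos hβ p).le.trans hbell)
      (by linarith)]
  exact (mul_le_of_le_one_left hβ.le two_pi_rpow_neg_half_mul_exp_le_one).trans hβ_le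

theorem bell_lower_Kminus (p β : ℝ) (hp : 1 ≤ p) (hβ : 0 < β) (hpβ : p ≤ 2 * β) :
    (2 * Real.pi) ^ (-(1 : ℝ) / 2) *
      Real.exp (-1 / (2 * Real.exp 1) + 1 / 3) * β ≤ Bell p β ^ (1 / p) :=
  bell_lower_Kminus_general p β hp hβ
end

section
/- (Dobinski's formula) For every nonnegative integer n, the Bell number B_n (the number of partitions of an n-element set) equals e^{-1} ∑_{k=0}^∞ k^n / k!. -/
open Real

set_option linter.unusedSectionVars false

section Comb

open Finset

variable {α : Type*} [DecidableEq α]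

/-- Partitions of a finset correspond to partitions of `univ` in its subtype. -/
def toSub (s : Finset α) (P : Finpartition s) :
    Finpartition (Finset.univ : Finset {x // x ∈ s}) where
  parts := P.parts.image (Finset.subtype (· ∈ s))
  supIndep := by
    rw [Finset.supIndep_iff_pairwiseDisjoint]
    rintro u hu v hv huv
    simp only [coe_image, Set.mem_image, mem_coe] at hu hv
    obtain ⟨t, ht, rfl⟩ := hu
    obtain ⟨w, hw, rfl⟩ := hv
    have htw : t ≠ w := fun h => huv (by rw [h])
    have := P.disjoint ht hw htw
    simp only [Function.onFun, id_eq] at this ⊢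
    rw [Finset.disjoint_left] at this ⊢
    intro x hx hx'
    rw [Finset.mem_subtype] at hx hx'
    exact this hx hx'
  sup_parts := by
    ext ⟨x, hx⟩
    simp only [Finset.mem_univ, iff_true, Finset.mem_sup, mem_image]
    obtain ⟨t, ht, hxt⟩ := P.exists_mem hx
    exact ⟨_, ⟨t, ht, rfl⟩, Finset.mem_subtype.2 hxt⟩
  bot_notMem := by
    simp only [Finset.bot_eq_empty, mem_image, not_exists, not_and]
    intro t ht h
    obtain ⟨y, hy⟩ := P.nonempty_of_mem_parts ht
    have hys : y ∈ s := P.le ht hy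
    have : (⟨y, hys⟩ : {x // x ∈ s}) ∈ t.subtype (· ∈ s) := Finset.mem_subtype.2 hy
    rw [h] at this
    exact absurd this (Finset.notMem_empty _)

def ofSub (s : Finset α) (Q : Finpartition (Finset.univ : Finset {x // x ∈ s})) :
    Finpartition s where
  parts := Q.parts.image (Finset.map (Function.Embedding.subtype _))
  supIndep := by
    rw [Finset.supIndep_iff_pairwiseDisjoint]
    rintro u hu v hv huv
    simp only [coe_image, Set.mem_image, mem_coe] at hu hv
    obtain ⟨t, ht, rfl⟩ := hu
    obtain ⟨w, hw, rfl⟩ := hv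
    have htw : t ≠ w := fun h => huv (by rw [h])
    have := Q.disjoint ht hw htw
    simp only [Function.onFun, id_eq] at this ⊢
    rw [Finset.disjoint_left] at this ⊢
    intro x hx hx'
    simp only [Finset.mem_map, Function.Embedding.coe_subtype] at hx hx'
    obtain ⟨a, ha, rfl⟩ := hx
    obtain ⟨b, hb, hba⟩ := hx'
    have : b = a := Subtype.ext hba
    subst this
    exact ‹∀ ⦃a : { x // x ∈ s }⦄, a ∈ t → a ∉ w› ha hb
  sup_parts := by
    ext x
    simp only [Finset.mem_sup, mem_image]
    constructor
    · rintro ⟨u, ⟨t, ht, rfl⟩, hx⟩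
      simp only [id_eq, Finset.mem_map, Function.Embedding.coe_subtype] at hx
      obtain ⟨⟨a, ha⟩, _, rfl⟩ := hx
      exact ha
    · intro hx
      obtain ⟨t, ht, hxt⟩ := Q.exists_mem (Finset.mem_univ (⟨x, hx⟩ : {x // x ∈ s}))
      exact ⟨_, ⟨t, ht, rfl⟩, Finset.mem_map_of_mem _ hxt⟩
  bot_notMem := by
    simp only [Finset.bot_eq_empty, mem_image, not_exists, not_and]
    intro t ht h
    rw [Finset.map_eq_empty] at h
    rw [h] at ht
    exact Q.bot_notMem ht

def subEquiv (s : Finset α) :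
    Finpartition s ≃ Finpartition (Finset.univ : Finset {x // x ∈ s}) where
  toFun := toSub s
  invFun := ofSub s
  left_inv P := by
    apply Finpartition.ext
    show (P.parts.image _).image _ = P.parts
    rw [Finset.image_image]
    rw [Finset.image_congr (g := id), Finset.image_id]
    intro t ht
    exact Finset.subtype_map_of_mem (fun x hx => P.le ht hx)
  right_inv Q := by
    apply Finpartition.ext
    show (Q.parts.image _).image _ = Q.parts
    rw [Finset.image_image]
    rw [Finset.image_congr (g := id), Finset.image_id]
    intro t _
    ext x
    simp [Finset.mem_subtype]

open Finset

variable {α : Type*} [DecidableEq α] {β : Type*} [DecidableEq β]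

/-- An equiv of types induces an order iso of finsets. -/
def finsetOrderIso (e : α ≃ β) : Finset α ≃o Finset β where
  toEquiv := e.finsetCongr
  map_rel_iff' := by
    intro s t
    simp only [Equiv.finsetCongr_apply]
    exact Finset.map_subset_map

@[simp] lemma finsetOrderIso_apply (e : α ≃ β) (s : Finset α) :
    finsetOrderIso e s = s.map e.toEmbedding := rfl

@[simp] lemma finsetOrderIso_roundtrip (e : α ≃ β) (v : Finset α) :
    (finsetOrderIso e.symm) ((finsetOrderIso e) v) = v := by
  simp only [finsetOrderIso_apply, Finset.map_map]
  ext x; simp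

@[simp] lemma finsetOrderIso_roundtrip' (e : α ≃ β) (v : Finset β) :
    (finsetOrderIso e) ((finsetOrderIso e.symm) v) = v := by
  simp only [finsetOrderIso_apply, Finset.map_map]
  ext x; simp

def univEquiv [Fintype α] [Fintype β] (e : α ≃ β) :
    Finpartition (Finset.univ : Finset α) ≃ Finpartition (Finset.univ : Finset β) where
  toFun P := (P.map (finsetOrderIso e)).copy (by
    show Finset.univ.map e.toEmbedding = Finset.univ
    simp)
  invFun Q := (Q.map (finsetOrderIso e.symm)).copy (by
    show Finset.univ.map e.symm.toEmbedding = Finset.univ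
    simp)
  left_inv P := by
    apply Finpartition.ext
    show (P.parts.map _).map _ = P.parts
    ext t
    simp only [Finset.mem_map]
    constructor
    · rintro ⟨u, ⟨v, hv, rfl⟩, rfl⟩
      have h : Finset.map e.symm.toEmbedding (Finset.map e.toEmbedding v) = v := by
        rw [Finset.map_map]; ext x; simp
      show Finset.map e.symm.toEmbedding (Finset.map e.toEmbedding v) ∈ P.parts
      rw [h]; exact hv
    · intro ht
      exact ⟨(finsetOrderIso e) t, ⟨t, ht, rfl⟩, finsetOrderIso_roundtrip e t⟩
  right_inv Q := by
    apply Finpartition.ext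
    show (Q.parts.map _).map _ = Q.parts
    ext t
    simp only [Finset.mem_map]
    constructor
    · rintro ⟨u, ⟨v, hv, rfl⟩, rfl⟩
      have h : Finset.map e.toEmbedding (Finset.map e.symm.toEmbedding v) = v := by
        rw [Finset.map_map]; ext x; simp
      show Finset.map e.toEmbedding (Finset.map e.symm.toEmbedding v) ∈ Q.parts
      rw [h]; exact hv
    · intro ht
      exact ⟨(finsetOrderIso e.symm) t, ⟨t, ht, rfl⟩, finsetOrderIso_roundtrip' e t⟩

/-- The `n`-th Bell number: the number of partitions of an `n`-element set. -/
noncomputable def bellNumber (n : ℕ) : ℕ :=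
  Nat.card (Finpartition (Finset.univ : Finset (Fin n)))

lemma card_finpartition_eq_bell (s : Finset α) :
    Nat.card (Finpartition s) = bellNumber s.card := by
  rw [bellNumber, Nat.card_congr (subEquiv s), Nat.card_congr (univEquiv s.equivFin)]

lemma avoid_parts_of_mem {s : Finset α} (P : Finpartition s) {b : Finset α}
    (hb : b ∈ P.parts) : (P.avoid b).parts = P.parts.erase b := by
  ext c
  rw [Finpartition.mem_avoid, Finset.mem_erase]
  constructor
  · rintro ⟨d, hd, hdb, rfl⟩
    have hne : d ≠ b := fun h => hdb (h ▸ le_refl b)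
    have hdisj : Disjoint d b := P.disjoint hd hb hne
    rw [Finset.sdiff_eq_self_iff_disjoint.2 hdisj]
    exact ⟨hne, hd⟩
  · rintro ⟨hne, hc⟩
    have hdisj : Disjoint c b := P.disjoint hc hb hne
    refine ⟨c, hc, fun hle => P.ne_bot hc (le_bot_iff.1 (hdisj le_rfl hle)),
      Finset.sdiff_eq_self_iff_disjoint.2 hdisj⟩

lemma finpart_heq {s₁ s₂ : Finset α} (h : s₁ = s₂) {P : Finpartition s₁}
    {Q : Finpartition s₂} (hp : P.parts = Q.parts) : HEq P Q := by
  subst h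
  exact heq_of_eq (Finpartition.ext hp)

variable (a : α) (s : Finset α)

def recEquiv (ha : a ∉ s) : Finpartition (insert a s) ≃ Σ t : s.powerset, Finpartition (s \ (t : Finset α)) where
  toFun P := ⟨⟨(P.part a).erase a, by
      rw [mem_powerset]
      intro x hx
      rw [Finset.mem_erase] at hx
      have := P.le (P.part_mem.2 (mem_insert_self a s)) hx.2
      rw [mem_insert] at this
      exact this.resolve_left hx.1⟩,
    (P.avoid (P.part a)).copy (by
      ext x
      simp only [mem_sdiff, mem_insert, Finset.mem_erase]
      constructor
      · rintro ⟨(rfl | hx), hpx⟩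
        · exact absurd (P.mem_part (mem_insert_self x s)) hpx
        · exact ⟨hx, fun h => hpx h.2⟩
      · rintro ⟨hx, hpx⟩
        exact ⟨Or.inr hx, fun h => hpx ⟨fun heq => ha (heq ▸ hx), h⟩⟩)⟩
  invFun x := x.2.extend (b := insert a (x.1 : Finset α))
    (by simp [Finset.bot_eq_empty])
    (by
      rw [Finset.disjoint_insert_right]
      exact ⟨fun h => ha (mem_sdiff.1 h).1, Finset.sdiff_disjoint⟩)
    (by
      have ht : (x.1 : Finset α) ⊆ s := mem_powerset.1 x.1.2
      rw [sup_eq_union, Finset.union_insert, Finset.sdiff_union_of_subset ht])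
  left_inv P := by
    apply Finpartition.ext
    show insert (insert a ((P.part a).erase a)) ((P.avoid (P.part a)).parts) = P.parts
    rw [Finset.insert_erase (P.mem_part (mem_insert_self a s)),
      avoid_parts_of_mem P (P.part_mem.2 (mem_insert_self a s)),
      Finset.insert_erase (P.part_mem.2 (mem_insert_self a s))]
  right_inv := by
    rintro ⟨⟨t, ht⟩, Q⟩
    have hts : t ⊆ s := mem_powerset.1 ht
    have hat : a ∉ t := fun h => ha (hts h)
    set P' := Q.extend (b := insert a t)
      (by simp [Finset.bot_eq_empty])
      (by
        rw [Finset.disjoint_insert_right]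
        exact ⟨fun h => ha (mem_sdiff.1 h).1, Finset.sdiff_disjoint⟩)
      (by rw [sup_eq_union, Finset.union_insert, Finset.sdiff_union_of_subset hts])
      with hP'
    have hparts : P'.parts = insert (insert a t) Q.parts := rfl
    have hmem : insert a t ∈ P'.parts := hparts ▸ mem_insert_self _ _
    have h1 : P'.part a = insert a t := P'.part_eq_of_mem hmem (mem_insert_self a t)
    have h2 : (P'.part a).erase a = t := by rw [h1, Finset.erase_insert hat]
    have hnotin : insert a t ∉ Q.parts := by
      intro h
      have := Q.le h (mem_insert_self a t)
      exact ha (mem_sdiff.1 this).1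
    have h3 : (P'.avoid (P'.part a)).parts = Q.parts := by
      rw [avoid_parts_of_mem P' (P'.part_mem.2 (mem_insert_self a s)), h1, hparts,
        Finset.erase_insert hnotin]
    have h4 : s \ ((P'.part a).erase a) = s \ t := by rw [h2]
    exact Sigma.ext (Subtype.ext h2) (finpart_heq h4 h3)

lemma card_finpartition_insert (ha : a ∉ s) :
    Nat.card (Finpartition (insert a s)) = ∑ t ∈ s.powerset, bellNumber (s.card - t.card) := by
  rw [Nat.card_congr (recEquiv a s ha), Nat.card_eq_fintype_card, Fintype.card_sigma]
  rw [Finset.sum_congr rfl (fun t _ => by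
    rw [← Nat.card_eq_fintype_card, card_finpartition_eq_bell,
      Finset.card_sdiff_of_subset (mem_powerset.1 t.2)])]
  exact Finset.sum_coe_sort s.powerset (fun t => bellNumber (s.card - t.card))

lemma bell_zero : bellNumber 0 = 1 := by
  rw [bellNumber, show (Finset.univ : Finset (Fin 0)) = ⊥ by simp]
  exact Nat.card_unique

lemma bell_rec (n : ℕ) :
    bellNumber (n + 1) = ∑ j ∈ Finset.range (n + 1), n.choose j * bellNumber j := by
  have ha : (Fin.last n) ∉ (Finset.univ.erase (Fin.last n)) := Finset.notMem_erase _ _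
  have hu : (Finset.univ : Finset (Fin (n+1))) = insert (Fin.last n) (Finset.univ.erase (Fin.last n)) := by
    rw [Finset.insert_erase (Finset.mem_univ _)]
  have hcard : (Finset.univ.erase (Fin.last n)).card = n := by
    rw [Finset.card_erase_of_mem (Finset.mem_univ _)]
    simp
  rw [bellNumber, hu, card_finpartition_insert _ _ ha, hcard,
    Finset.sum_powerset_apply_card (fun m => bellNumber (n - m)), hcard,
    ← Finset.sum_range_reflect]
  refine Finset.sum_congr rfl fun j hj => ?_
  rw [Finset.mem_range, Nat.lt_succ_iff] at hj
  rw [smul_eq_mul, Nat.add_sub_cancel, Nat.choose_symm hj, Nat.sub_sub_self hj]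

end Comb

section Anal
open Finset

noncomputable def dob (n : ℕ) : ℝ := ∑' k : ℕ, (k : ℝ) ^ n / (Nat.factorial k)

lemma summable_dob (n : ℕ) : Summable (fun k : ℕ => (k : ℝ) ^ n / (Nat.factorial k)) := by
  apply summable_of_ratio_norm_eventually_le (r := 1/2) (by norm_num)
  filter_upwards [Filter.eventually_ge_atTop (2 ^ (n + 1))] with k hk
  have hk1 : 1 ≤ k := le_trans Nat.one_le_two_pow hk
  have hkR : (2:ℝ) ^ (n+1) ≤ (k:ℝ) := by exact_mod_cast hk
  have h0 : (0:ℝ) < k := by exact_mod_cast hk1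
  have hk1R : (1:ℝ) ≤ (k:ℝ) := by exact_mod_cast hk1
  have hfact : (0:ℝ) < k.factorial := by exact_mod_cast k.factorial_pos
  rw [Real.norm_of_nonneg (by positivity), Real.norm_of_nonneg (by positivity),
    Nat.factorial_succ]
  push_cast
  have h1 : ((k:ℝ)+1)^n ≤ 2^n * (k:ℝ)^n := by
    calc ((k:ℝ)+1)^n ≤ (2*k)^n := by
          apply pow_le_pow_left₀ (by positivity) (by linarith)
      _ = 2^n * k^n := mul_pow (2:ℝ) (k:ℝ) n
  have hps : (2:ℝ)^(n+1) = 2 * 2^n := by ring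
  have hkn : (0:ℝ) ≤ (k:ℝ)^n := by positivity
  have h2 : (2:ℝ)^(n+1) * (k:ℝ)^n ≤ (k:ℝ) * (k:ℝ)^n :=
    mul_le_mul_of_nonneg_right hkR hkn
  have key : ((k:ℝ)+1)^n * 2 ≤ (k:ℝ)^n * ((k:ℝ)+1) := by nlinarith
  rw [div_le_iff₀ (by positivity : (0:ℝ) < ((k:ℝ)+1) * (k.factorial : ℝ))]
  have hrw : 1/2 * ((k:ℝ)^n / (k.factorial:ℝ)) * (((k:ℝ)+1) * (k.factorial:ℝ))
      = 1/2 * ((k:ℝ)^n * ((k:ℝ)+1)) := by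
    field_simp
  rw [hrw]
  linarith [key]

lemma dob_zero : dob 0 = Real.exp 1 := by
  rw [dob, Real.exp_eq_exp_ℝ, NormedSpace.exp_eq_tsum_div]
  simp

lemma dob_rec (n : ℕ) :
    dob (n + 1) = ∑ j ∈ Finset.range (n + 1), (n.choose j : ℝ) * dob j := by
  have h1 : dob (n+1) = ∑' k : ℕ, ((k:ℝ)+1)^n / (Nat.factorial k) := by
    rw [dob, Summable.tsum_eq_zero_add (summable_dob (n+1))]
    simp only [Nat.cast_zero, Nat.factorial_zero, Nat.cast_one, zero_pow (Nat.succ_ne_zero n),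
      zero_div, zero_add]
    congr 1
    ext k
    rw [Nat.factorial_succ]
    push_cast
    rw [pow_succ]
    field_simp
  rw [h1]
  have h2 : ∀ k : ℕ, ((k:ℝ)+1)^n / (Nat.factorial k)
      = ∑ j ∈ Finset.range (n + 1), (n.choose j : ℝ) * ((k:ℝ)^j / (Nat.factorial k)) := by
    intro k
    rw [add_pow]
    rw [Finset.sum_div]
    refine Finset.sum_congr rfl fun j hj => ?_
    rw [one_pow]
    ring
  rw [tsum_congr h2, Summable.tsum_finsetSum (fun j _ => (summable_dob j).mul_left _)]
  refine Finset.sum_congr rfl fun j _ => ?_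
  rw [tsum_mul_left, dob]

end Anal

theorem dobinski (n : ℕ) :
    (bellNumber n : ℝ) = Real.exp (-1) * ∑' k : ℕ, (k : ℝ) ^ n / (Nat.factorial k) := by
  show (bellNumber n : ℝ) = Real.exp (-1) * dob n
  induction n using Nat.strong_induction_on with
  | _ n ih =>
    match n with
    | 0 =>
      rw [bell_zero, dob_zero, ← Real.exp_add]
      norm_num
    | (m + 1) =>
      rw [bell_rec, dob_rec]
      push_cast
      rw [Finset.mul_sum]
      refine Finset.sum_congr rfl fun j hj => ?_
      rw [Finset.mem_range] at hj
      rw [ih j hj]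
      ring
end
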